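/- Let G be a quasi-line graph with clique number ω containing a homogeneous pair of cliques (A, B) such that there exist a₁, a₂ ∈ A and b ∈ B with a₁b an edge and a₂b not an edge. Then every vertex b₀ ∈ B satisfies deg_{G²}(b₀) ≤ ω² + ω. -/

import Mathlib

/-!
Claw-freeness at a vertex `x` makes the neighbours of `x` outside the closed neighbourhood of
a neighbour `v` of `x` a clique. A vertex at distance two from `b₀ ∈ B` lies in `A`, or is outside
`A ∪ B`, complete to `A` and anticomplete to `B` (these vertices form, with `A`, a clique by
claw-freeness at `a₁`), or is reached through a middle vertex `x` complete to `B` and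
anticomplete to `A`: a middle vertex complete to both `A` and `B` would centre a claw on `a₂`,
`b` and the far vertex. The middle vertices form a clique with `b`, and the far vertices reached
through one `x` a clique with `x`, so there are at most `(ω - 1)²` of these. With the two
cliques covering `N(b₀)` this gives `deg_{G²}(b₀) ≤ ω + 2(ω - 1) + (ω - 1)² < ω² + ω`.
-/

open SimpleGraph Finset

variable {V : Type*}

/-- A graph is claw-free if it has no induced `K_{1,3}`. -/
def ClawFree (G : SimpleGraph V) : Prop :=
  ∀ v a b c : V, G.Adj v a → G.Adj v b → G.Adj v c →
    a ≠ b → a ≠ c → b ≠ c → G.Adj a b ∨ G.Adj a c ∨ G.Adj b c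

/-- The square of a graph: join distinct vertices at distance at most 2. -/
def square (G : SimpleGraph V) : SimpleGraph V where
  Adj u w := u ≠ w ∧ (G.Adj u w ∨ ∃ x, G.Adj u x ∧ G.Adj x w)
  symm := ⟨by
    rintro u w ⟨h1, h2⟩
    refine ⟨h1.symm, ?_⟩
    rcases h2 with h | ⟨x, hx1, hx2⟩
    · exact Or.inl h.symm
    · exact Or.inr ⟨x, hx2.symm, hx1.symm⟩⟩
  loopless := ⟨fun u h => h.1 rfl⟩

/-- The second neighbourhood of `v` : vertices at distance exactly two from `v`. -/
def secondNbhd (G : SimpleGraph V) (v : V) : Set V :=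
  {w | w ≠ v ∧ ¬G.Adj v w ∧ ∃ x, G.Adj v x ∧ G.Adj x w}

/-- The square degree of a vertex. -/
noncomputable def sqDeg (G : SimpleGraph V) (v : V) : ℕ :=
  ((square G).neighborSet v).ncard

/-- A quasi-line graph: every neighbourhood is covered by two cliques. -/
def QuasiLine (G : SimpleGraph V) : Prop :=
  ∀ v : V, ∃ C₁ C₂ : Set V, G.IsClique C₁ ∧ G.IsClique C₂ ∧ G.neighborSet v ⊆ C₁ ∪ C₂

section Cliques

variable {G : SimpleGraph V} {S : Set V} {v x : V}

theorem QuasiLine.clawFree (hG : QuasiLine G) : ClawFree G := by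
  intro v a b c hva hvb hvc hab hac hbc
  obtain ⟨C₁, C₂, h₁, h₂, hsub⟩ := hG v
  rcases hsub hva with ha | ha <;> rcases hsub hvb with hb | hb <;>
    rcases hsub hvc with hc | hc
  exacts [.inl (h₁ ha hb hab), .inl (h₁ ha hb hab), .inr (.inl (h₁ ha hc hac)),
    .inr (.inr (h₂ hb hc hbc)), .inr (.inr (h₁ hb hc hbc)), .inr (.inl (h₂ ha hc hac)),
    .inl (h₂ ha hb hab), .inl (h₂ ha hb hab)]

theorem SimpleGraph.IsClique.ncard_le_cliqueNum [Finite V] (hS : G.IsClique S) :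
    S.ncard ≤ G.cliqueNum := by
  have hfin := S.toFinite
  rw [← hfin.coe_toFinset, Set.ncard_coe_finset]
  exact IsClique.card_le_cliqueNum (tc := by rwa [hfin.coe_toFinset])

theorem SimpleGraph.IsClique.ncard_add_one_le_cliqueNum [Finite V] (hS : G.IsClique S)
    (hSv : S ⊆ G.neighborSet v) : S.ncard + 1 ≤ G.cliqueNum := by
  have hv : v ∉ S := fun h => G.loopless.irrefl v (hSv h)
  rw [← Set.ncard_insert_of_notMem hv S.toFinite]
  exact (isClique_insert.2 ⟨hS, fun w hw _ => hSv hw⟩).ncard_le_cliqueNum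

theorem QuasiLine.ncard_neighborSet_add_two_le [Finite V] (hG : QuasiLine G) (v : V) :
    (G.neighborSet v).ncard + 2 ≤ 2 * G.cliqueNum := by
  obtain ⟨C₁, C₂, h₁, h₂, hsub⟩ := hG v
  have hcover : G.neighborSet v ⊆ (C₁ ∩ G.neighborSet v) ∪ (C₂ ∩ G.neighborSet v) := by
    rw [← Set.union_inter_distrib_right]
    exact Set.subset_inter hsub le_rfl
  have hC₁ : (C₁ ∩ G.neighborSet v).ncard + 1 ≤ G.cliqueNum :=
    (h₁.subset Set.inter_subset_left).ncard_add_one_le_cliqueNum Set.inter_subset_right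
  have hC₂ : (C₂ ∩ G.neighborSet v).ncard + 1 ≤ G.cliqueNum :=
    (h₂.subset Set.inter_subset_left).ncard_add_one_le_cliqueNum Set.inter_subset_right
  have := (Set.ncard_le_ncard hcover).trans (Set.ncard_union_le _ _)
  omega

theorem ClawFree.isClique_neighborSet_diff (hG : ClawFree G) (hvx : G.Adj v x) :
    G.IsClique (G.neighborSet x \ insert v (G.neighborSet v)) := by
  rintro u ⟨hxu, hu⟩ w ⟨hxw, hw⟩ huw
  simp only [Set.mem_insert_iff, mem_neighborSet, not_or] at hu hw
  exact ((hG x v u w hvx.symm hxu hxw (Ne.symm hu.1) (Ne.symm hw.1) huw).resolve_left hu.2)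
    |>.resolve_left hw.2

end Cliques

theorem Set.ncard_biUnion_le_mul {ι α : Type*} {X : Set ι} (hX : X.Finite) {s : ι → Set α}
    {k : ℕ} (hs : ∀ i ∈ X, (s i).ncard ≤ k) : (⋃ i ∈ X, s i).ncard ≤ X.ncard * k := by
  have h := Finset.set_ncard_biUnion_le hX.toFinset s
  simp only [Set.Finite.mem_toFinset] at h
  rw [Set.ncard_eq_toFinset_card X hX, ← smul_eq_mul]
  exact h.trans (Finset.sum_le_card_nsmul _ _ _ fun i hi => hs i (hX.mem_toFinset.1 hi))

def onlyCompleteTo (G : SimpleGraph V) (A B : Set V) : Set V :=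
  {w | w ∉ A ∧ w ∉ B ∧ (∀ a ∈ A, G.Adj w a) ∧ ∀ b ∈ B, ¬G.Adj w b}

section HomogeneousPair

variable {G : SimpleGraph V} {A B : Set V} {a b : V}

theorem onlyCompleteTo_subset (ha : a ∈ A) (hb : b ∈ B) :
    onlyCompleteTo G A B ⊆ G.neighborSet a \ insert b (G.neighborSet b) := by
  rintro w ⟨-, hwB, hwA, hwB'⟩
  refine ⟨(hwA a ha).symm, ?_⟩
  rintro (rfl | h)
  exacts [hwB hb, hwB' b hb h.symm]

theorem ClawFree.isClique_onlyCompleteTo (hG : ClawFree G) (ha : a ∈ A) (hb : b ∈ B)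
    (hab : G.Adj a b) : G.IsClique (onlyCompleteTo G A B) :=
  (hG.isClique_neighborSet_diff hab.symm).subset (onlyCompleteTo_subset ha hb)

theorem ClawFree.ncard_onlyCompleteTo_add_one_le [Finite V] (hG : ClawFree G) (ha : a ∈ A)
    (hb : b ∈ B) (hab : G.Adj a b) : (onlyCompleteTo G A B).ncard + 1 ≤ G.cliqueNum :=
  (hG.isClique_onlyCompleteTo ha hb hab).ncard_add_one_le_cliqueNum
    fun _ hw => (onlyCompleteTo_subset ha hb hw).1

theorem ClawFree.isClique_union_onlyCompleteTo (hG : ClawFree G) (hA : G.IsClique A)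
    (ha : a ∈ A) (hb : b ∈ B) (hab : G.Adj a b) : G.IsClique (A ∪ onlyCompleteTo G A B) :=
  Set.pairwise_union.2 ⟨hA, hG.isClique_onlyCompleteTo ha hb hab,
    fun _ ha' _ hw _ => ⟨(hw.2.2.1 _ ha').symm, hw.2.2.1 _ ha'⟩⟩

theorem square_neighborSet_subset (hG : ClawFree G) (hAB : Disjoint A B) (hB : G.IsClique B)
    (hhomA : ∀ u, u ∉ A → u ∉ B → (∀ a ∈ A, G.Adj u a) ∨ (∀ a ∈ A, ¬G.Adj u a))
    (hhomB : ∀ u, u ∉ A → u ∉ B → (∀ b ∈ B, G.Adj u b) ∨ (∀ b ∈ B, ¬G.Adj u b))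
    (ha : a ∈ A) (hb : b ∈ B) (hnadj : ¬G.Adj a b) {b₀ : V} (hb₀ : b₀ ∈ B) :
    (square G).neighborSet b₀ ⊆ G.neighborSet b₀ ∪ (A ∪ onlyCompleteTo G A B) ∪
      ⋃ x ∈ onlyCompleteTo G B A, G.neighborSet x \ insert b₀ (G.neighborSet b₀) := by
  rintro w ⟨hne, hw⟩
  by_cases hb₀w : G.Adj b₀ w
  · exact .inl (.inl hb₀w)
  obtain ⟨u, hb₀u, huw⟩ := hw.resolve_left hb₀w
  by_cases hwA : w ∈ A
  · exact .inl (.inr (.inl hwA))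
  have hwB : w ∉ B := fun h => hb₀w (hB hb₀ h hne)
  have hwB' : ∀ b' ∈ B, ¬G.Adj w b' :=
    (hhomB w hwA hwB).resolve_left fun h => hb₀w (h b₀ hb₀).symm
  rcases hhomA w hwA hwB with hwA' | hwA'
  · exact .inl (.inr (.inr ⟨hwA, hwB, hwA', hwB'⟩))
  have huA : u ∉ A := fun h => hwA' u h huw.symm
  have huB : u ∉ B := fun h => hwB' u h huw.symm
  have huB' : ∀ b' ∈ B, G.Adj u b' :=
    (hhomB u huA huB).resolve_right fun h => h b₀ hb₀ hb₀u.symm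
  -- otherwise `u` would be the centre of a claw on `a`, `b`, `w`
  have huA' : ∀ a' ∈ A, ¬G.Adj u a' := by
    refine (hhomA u huA huB).resolve_left fun huA' => ?_
    have hab : a ≠ b := fun h => Set.disjoint_left.1 hAB ha (h ▸ hb)
    rcases hG u a b w (huA' a ha) (huB' b hb) huw hab (ne_of_mem_of_not_mem ha hwA)
      (ne_of_mem_of_not_mem hb hwB) with h | h | h
    exacts [hnadj h, hwA' a ha h.symm, hwB' b hb h.symm]
  refine .inr (Set.mem_biUnion ⟨huB, huA, huB', huA'⟩ ⟨huw, ?_⟩)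
  rintro (rfl | h)
  exacts [hne rfl, hb₀w h]

end HomogeneousPair

theorem stmt_8_general [Fintype V] (G : SimpleGraph V) (hG : QuasiLine G)
    (A B : Set V) (hAB : Disjoint A B) (hA : G.IsClique A) (hB : G.IsClique B)
    (hhomA : ∀ u, u ∉ A → u ∉ B → (∀ a ∈ A, G.Adj u a) ∨ (∀ a ∈ A, ¬G.Adj u a))
    (hhomB : ∀ u, u ∉ A → u ∉ B → (∀ b ∈ B, G.Adj u b) ∨ (∀ b ∈ B, ¬G.Adj u b))
    (a₁ a₂ : A) (b : B) (hadj : G.Adj a₁ b) (hnadj : ¬G.Adj a₂ b) :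
    ∀ b₀ ∈ B, sqDeg G b₀ ≤ G.cliqueNum ^ 2 + G.cliqueNum := by
  intro b₀ hb₀
  have hcf := hG.clawFree
  set X := onlyCompleteTo G B A
  have hN := hG.ncard_neighborSet_add_two_le b₀
  have hF := (hcf.isClique_union_onlyCompleteTo hA a₁.2 b.2 hadj).ncard_le_cliqueNum
  have hX : X.ncard + 1 ≤ G.cliqueNum := hcf.ncard_onlyCompleteTo_add_one_le b.2 a₁.2 hadj.symm
  obtain ⟨k, hk⟩ : ∃ k, G.cliqueNum = k + 1 := ⟨G.cliqueNum - 1, by omega⟩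
  set U := ⋃ x ∈ X, G.neighborSet x \ insert b₀ (G.neighborSet b₀)
  have hU : U.ncard ≤ X.ncard * k :=
    Set.ncard_biUnion_le_mul X.toFinite fun x hx => by
      have := (hcf.isClique_neighborSet_diff (hx.2.2.1 b₀ hb₀).symm).ncard_add_one_le_cliqueNum
        Set.sdiff_subset
      omega
  have hsq : sqDeg G b₀ ≤
      (G.neighborSet b₀).ncard + (A ∪ onlyCompleteTo G A B).ncard + U.ncard :=
    calc sqDeg G b₀ ≤ (G.neighborSet b₀ ∪ (A ∪ onlyCompleteTo G A B) ∪ U).ncard :=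
          Set.ncard_le_ncard (square_neighborSet_subset hcf hAB hB hhomA hhomB a₂.2 b.2 hnadj hb₀)
      _ ≤ _ := (Set.ncard_union_le _ _).trans (Nat.add_le_add_right (Set.ncard_union_le _ _) _)
  have hXk : X.ncard * k ≤ k * k := Nat.mul_le_mul_right k (by omega)
  rw [hk]
  nlinarith

theorem stmt_8 [Fintype V] (G : SimpleGraph V) (hG : QuasiLine G)
    (A B : Set V) (hAB : Disjoint A B) (hA : G.IsClique A) (hB : G.IsClique B)
    (hsize : 2 ≤ A.ncard ∨ 2 ≤ B.ncard)
    (hhomA : ∀ u, u ∉ A → u ∉ B → (∀ a ∈ A, G.Adj u a) ∨ (∀ a ∈ A, ¬G.Adj u a))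
    (hhomB : ∀ u, u ∉ A → u ∉ B → (∀ b ∈ B, G.Adj u b) ∨ (∀ b ∈ B, ¬G.Adj u b))
    (a₁ a₂ : A) (b : B) (hadj : G.Adj a₁ b) (hnadj : ¬G.Adj a₂ b) :
    ∀ b₀ ∈ B, sqDeg G b₀ ≤ G.cliqueNum ^ 2 + G.cliqueNum :=
  stmt_8_general G hG A B hAB hA hB hhomA hhomB a₁ a₂ b hadj hnadj
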